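/- arXiv:2008.10195 — 2 statements merged into one kernel-verified Lean document; each statement's English description precedes it below -/
import Mathlib

section
/- Let ψ, φ, f₁, f₂, h₁ be as follows: ψ holomorphic on the right half plane H, f₂ holomorphic, φ : H → H differentiable, f₁ = h₁ + conj(g₁) harmonic with h₁'g₁' = -1, and suppose f₁(ψ(ζ)) = f₂(φ(ζ)) on H with f₂'(φ(ζ)) ≠ 0 and ψ'(ζ) ≠ 0. Then ψ'(ζ)h₁'(ψ(ζ)) = φ_ζ(ζ)f₂'(φ(ζ)) and -conj(ψ'(ζ)/h₁'(ψ(ζ))) = φ_{ζ̄}(ζ)f₂'(φ(ζ)), and consequently |φ_{ζ̄}(ζ)/φ_ζ(ζ)| = 1/|h₁'(ψ(ζ))|². -/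
open Complex

/-- Wirtinger derivative `∂/∂ζ` of a real-differentiable map `φ : ℂ → ℂ`. -/
noncomputable def wirtD (φ : ℂ → ℂ) (z : ℂ) : ℂ :=
  (fderiv ℝ φ z 1 - Complex.I * fderiv ℝ φ z Complex.I) / 2

/-- Wirtinger derivative `∂/∂ζ̄` of a real-differentiable map `φ : ℂ → ℂ`. -/
noncomputable def wirtDbar (φ : ℂ → ℂ) (z : ℂ) : ℂ :=
  (fderiv ℝ φ z 1 + Complex.I * fderiv ℝ φ z Complex.I) / 2

/-! Both sides of `f₁ ∘ ψ = f₂ ∘ φ` have the same Wirtinger derivatives. On the left,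
`∂(h + conj g) = h'` and `∂̄(h + conj g) = conj g'`, composed with the holomorphic `ψ`; on the right
the holomorphic `f₂` multiplies both Wirtinger derivatives of `φ` by `f₂'(φ)`. Dividing the two
identities and using `g₁' = -1/h₁'` gives the dilatation. -/

open ComplexConjugate

section Wirtinger

variable {F G f h g φ : ℂ → ℂ} {z a b : ℂ}

theorem Filter.EventuallyEq.wirtD_eq (hFG : F =ᶠ[nhds z] G) : wirtD F z = wirtD G z := by
  rw [wirtD, wirtD, hFG.fderiv_eq]

theorem Filter.EventuallyEq.wirtDbar_eq (hFG : F =ᶠ[nhds z] G) :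
    wirtDbar F z = wirtDbar G z := by
  rw [wirtDbar, wirtDbar, hFG.fderiv_eq]

theorem wirtD_eq_of_fderiv_apply (hF : ∀ v, fderiv ℝ F z v = a * v + b * conj v) :
    wirtD F z = a := by
  rw [wirtD, hF, hF]
  simp only [map_one, conj_I, mul_one]
  linear_combination (-a / 2 + b / 2) * I_mul_I

theorem wirtDbar_eq_of_fderiv_apply (hF : ∀ v, fderiv ℝ F z v = a * v + b * conj v) :
    wirtDbar F z = b := by
  rw [wirtDbar, hF, hF]
  simp only [map_one, conj_I, mul_one]
  linear_combination (a / 2 - b / 2) * I_mul_I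

theorem fderiv_add_conj_apply (hh : DifferentiableAt ℂ h z) (hg : DifferentiableAt ℂ g z)
    (v : ℂ) :
    fderiv ℝ (fun w => h w + conj (g w)) z v = deriv h z * v + conj (deriv g z) * conj v := by
  have hF : HasFDerivAt (fun w => h w + conj (g w))
      ((fderiv ℂ h z).restrictScalars ℝ +
        conjCLE.toContinuousLinearMap.comp ((fderiv ℂ g z).restrictScalars ℝ)) z :=
    (hh.hasFDerivAt.restrictScalars ℝ).add
      (conjCLE.toContinuousLinearMap.hasFDerivAt.comp z (hg.hasFDerivAt.restrictScalars ℝ))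
  rw [hF.fderiv]
  simp [fderiv_eq_smul_deriv, mul_comm]

theorem wirtD_add_conj (hh : DifferentiableAt ℂ h z) (hg : DifferentiableAt ℂ g z) :
    wirtD (fun w => h w + conj (g w)) z = deriv h z :=
  wirtD_eq_of_fderiv_apply (fderiv_add_conj_apply hh hg)

theorem wirtDbar_add_conj (hh : DifferentiableAt ℂ h z) (hg : DifferentiableAt ℂ g z) :
    wirtDbar (fun w => h w + conj (g w)) z = conj (deriv g z) :=
  wirtDbar_eq_of_fderiv_apply (fderiv_add_conj_apply hh hg)

theorem DifferentiableAt.fderiv_real_apply (hf : DifferentiableAt ℂ f z) (v : ℂ) :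
    fderiv ℝ f z v = deriv f z * v := by
  rw [hf.fderiv_restrictScalars ℝ, ContinuousLinearMap.coe_restrictScalars',
    fderiv_eq_smul_deriv, smul_eq_mul, mul_comm]

theorem wirtD_comp (hf : DifferentiableAt ℂ f (φ z)) (hφ : DifferentiableAt ℝ φ z) :
    wirtD (f ∘ φ) z = deriv f (φ z) * wirtD φ z := by
  rw [wirtD, wirtD, fderiv_comp z (hf.restrictScalars ℝ) hφ]
  simp only [ContinuousLinearMap.comp_apply, hf.fderiv_real_apply]
  ring

theorem wirtDbar_comp (hf : DifferentiableAt ℂ f (φ z)) (hφ : DifferentiableAt ℝ φ z) :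
    wirtDbar (f ∘ φ) z = deriv f (φ z) * wirtDbar φ z := by
  rw [wirtDbar, wirtDbar, fderiv_comp z (hf.restrictScalars ℝ) hφ]
  simp only [ContinuousLinearMap.comp_apply, hf.fderiv_real_apply]
  ring

end Wirtinger

theorem stmt7_general (ψ φ f₂ h₁ g₁ : ℂ → ℂ)
    (H : Set ℂ) (hH : H = {z : ℂ | 0 < z.re})
    (hψ : DifferentiableOn ℂ ψ H) (hf₂ : Differentiable ℂ f₂)
    (hh₁ : Differentiable ℂ h₁) (hg₁ : Differentiable ℂ g₁)
    (hφdiff : ∀ ζ ∈ H, DifferentiableAt ℝ φ ζ)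
    (hW : ∀ z : ℂ, deriv h₁ z * deriv g₁ z = -1)
    (hcomp : ∀ ζ ∈ H, h₁ (ψ ζ) + (starRingEnd ℂ) (g₁ (ψ ζ)) = f₂ (φ ζ))
    (hne : ∀ ζ ∈ H, deriv f₂ (φ ζ) ≠ 0) (hψ' : ∀ ζ ∈ H, deriv ψ ζ ≠ 0) :
    ∀ ζ ∈ H,
      deriv ψ ζ * deriv h₁ (ψ ζ) = wirtD φ ζ * deriv f₂ (φ ζ) ∧
      -(starRingEnd ℂ) (deriv ψ ζ / deriv h₁ (ψ ζ)) = wirtDbar φ ζ * deriv f₂ (φ ζ) ∧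
      ‖wirtDbar φ ζ / wirtD φ ζ‖ = 1 / (‖deriv h₁ (ψ ζ)‖) ^ 2 := by
  intro ζ hζ
  have hHζ : H ∈ nhds ζ :=
    (hH ▸ isOpen_lt continuous_const continuous_re : IsOpen H).mem_nhds hζ
  have hψζ : DifferentiableAt ℂ ψ ζ := hψ.differentiableAt hHζ
  have hloc : (fun w => (h₁ ∘ ψ) w + conj ((g₁ ∘ ψ) w)) =ᶠ[nhds ζ] f₂ ∘ φ :=
    Filter.eventuallyEq_of_mem hHζ hcomp
  have hh₁ψ : DifferentiableAt ℂ (h₁ ∘ ψ) ζ := (hh₁ _).comp ζ hψζ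
  have hg₁ψ : DifferentiableAt ℂ (g₁ ∘ ψ) ζ := (hg₁ _).comp ζ hψζ
  have hD : wirtD φ ζ * deriv f₂ (φ ζ) = deriv ψ ζ * deriv h₁ (ψ ζ) := by
    rw [mul_comm, ← wirtD_comp (hf₂ _) (hφdiff ζ hζ), ← hloc.wirtD_eq,
      wirtD_add_conj hh₁ψ hg₁ψ, deriv_comp ζ (hh₁ _) hψζ, mul_comm]
  have hDbar : wirtDbar φ ζ * deriv f₂ (φ ζ) = conj (deriv g₁ (ψ ζ) * deriv ψ ζ) := by
    rw [mul_comm, ← wirtDbar_comp (hf₂ _) (hφdiff ζ hζ), ← hloc.wirtDbar_eq,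
      wirtDbar_add_conj hh₁ψ hg₁ψ, deriv_comp ζ (hg₁ _) hψζ]
  have hh₁' : deriv h₁ (ψ ζ) ≠ 0 := left_ne_zero_of_mul (by rw [hW]; norm_num)
  have hg₁' : deriv g₁ (ψ ζ) = -1 / deriv h₁ (ψ ζ) := by
    rw [eq_div_iff hh₁', ← hW (ψ ζ), mul_comm]
  refine ⟨hD.symm, ?_, ?_⟩
  · rw [hDbar, hg₁', ← map_neg]
    congr 1
    ring
  · rw [← mul_div_mul_right _ _ (hne ζ hζ), hD, hDbar, hg₁', norm_div, norm_conj, norm_mul,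
      norm_mul, norm_div, norm_neg, norm_one]
    field_simp [norm_ne_zero_iff.mpr (hψ' ζ hζ), norm_ne_zero_iff.mpr hh₁']

/-- Chain-rule identities for `f₁(ψ(ζ)) = f₂(φ(ζ))` and the resulting dilatation formula. -/
theorem stmt7 (ψ φ f₂ h₁ g₁ : ℂ → ℂ)
    (H : Set ℂ) (hH : H = {z : ℂ | 0 < z.re})
    (hψ : DifferentiableOn ℂ ψ H) (hf₂ : Differentiable ℂ f₂)
    (hh₁ : Differentiable ℂ h₁) (hg₁ : Differentiable ℂ g₁)
    (hφmap : Set.MapsTo φ H H) (hφdiff : ∀ ζ ∈ H, DifferentiableAt ℝ φ ζ)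
    (hW : ∀ z : ℂ, deriv h₁ z * deriv g₁ z = -1)
    (hcomp : ∀ ζ ∈ H, h₁ (ψ ζ) + (starRingEnd ℂ) (g₁ (ψ ζ)) = f₂ (φ ζ))
    (hne : ∀ ζ ∈ H, deriv f₂ (φ ζ) ≠ 0) (hψ' : ∀ ζ ∈ H, deriv ψ ζ ≠ 0) :
    ∀ ζ ∈ H,
      deriv ψ ζ * deriv h₁ (ψ ζ) = wirtD φ ζ * deriv f₂ (φ ζ) ∧
      -(starRingEnd ℂ) (deriv ψ ζ / deriv h₁ (ψ ζ)) = wirtDbar φ ζ * deriv f₂ (φ ζ) ∧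
      ‖wirtDbar φ ζ / wirtD φ ζ‖ = 1 / (‖deriv h₁ (ψ ζ)‖) ^ 2 :=
  stmt7_general ψ φ f₂ h₁ g₁ H hH hψ hf₂ hh₁ hg₁ hφdiff hW hcomp hne hψ'
end

section
/- Let ψ be a conformal (injective holomorphic) map from the right half plane H onto a domain P ⊆ H with ψ(∞) = ∞ (i.e., ψ(ζ) → ∞ as ζ → ∞). Then for each β < π/2 there exists c ≥ 0 such that ψ'(ζ) → c uniformly as ζ → ∞ in the sector {|arg ζ| ≤ β}, and moreover ψ(ζ)/ζ → c in the same sector. -/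
/-
Everything rests on the Schwarz–Pick lemma for the right half plane, written as
`‖f ζ - f ξ‖² Re ζ Re ξ ≤ ‖ζ - ξ‖² Re f(ζ) Re f(ξ)`. On the positive axis it makes `Re f(x) / x`
decreasing, with a limit `c ≥ 0`, and letting `ξ = x → ∞` gives Julia's inequality
`Re f ≥ c Re ζ`. Hence `g = f - c ζ` again maps into the closed half plane, now with
`Re g(x) = o(x)`. In a sector `k ‖ζ‖ ≤ Re ζ`, Schwarz–Pick against the real point `‖ζ‖` is a
Harnack inequality `k ‖g ζ - g ‖ζ‖‖ ≤ 4 Re g(‖ζ‖)`; together with its infinitesimal form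
`‖g'(ζ)‖ Re ζ ≤ Re g(ζ)` it gives `g' → 0` and `g(ζ) / ζ → 0` there, the latter because
`g' → 0` along the axis forces `g(x) = o(x)`.
-/

open Complex Filter Set Metric Topology ComplexConjugate Asymptotics

theorem isLittleO_id_of_tendsto_deriv {E : Type*} [NormedAddCommGroup E] [NormedSpace ℝ E]
    {f f' : ℝ → E} (hf : ∀ᶠ x in atTop, HasDerivAt f (f' x) x)
    (hf' : Tendsto f' atTop (𝓝 0)) : f =o[atTop] id := by
  refine isLittleO_iff.mpr fun ε hε => ?_
  obtain ⟨a, ha⟩ := eventually_atTop.mp <| (hf.and (hf'.eventually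
    (closedBall_mem_nhds 0 (half_pos hε)))).and (eventually_ge_atTop 0)
  filter_upwards [eventually_ge_atTop a, eventually_ge_atTop (2 * ‖f a‖ / ε)] with x hxa hx
  have hmvt := norm_image_sub_le_of_norm_deriv_le_segment' (f := f) (C := ε / 2)
    (fun u hu => (ha u hu.1).1.1.hasDerivWithinAt)
    (fun u hu => by simpa using (ha u hu.1).1.2) x (right_mem_Icc.mpr hxa)
  have ha0 : 0 ≤ a := (ha a le_rfl).2
  have hfa : ‖f a‖ ≤ ε / 2 * x := by
    rw [div_le_iff₀ hε] at hx
    linarith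
  calc ‖f x‖ ≤ ‖f a‖ + ‖f x - f a‖ := norm_le_insert' _ _
    _ ≤ ε / 2 * x + ε / 2 * (x - a) := add_le_add hfa hmvt
    _ ≤ ε * ‖id x‖ := by
      rw [id, Real.norm_of_nonneg (ha0.trans hxa)]
      nlinarith

namespace Complex

noncomputable def cayley (v w : ℂ) : ℂ := (w - v) / (w + conj v)

noncomputable def cayleyInv (v z : ℂ) : ℂ := (v + z * conj v) / (1 - z)

lemma sq_norm_add_conj (u v : ℂ) : ‖u + conj v‖ ^ 2 = ‖u - v‖ ^ 2 + 4 * u.re * v.re := by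
  simp only [Complex.sq_norm, normSq_apply, add_re, add_im, sub_re, sub_im, conj_re, conj_im]
  ring

lemma add_conj_ne_zero {u v : ℂ} (hu : 0 < u.re) (hv : 0 < v.re) : u + conj v ≠ 0 := by
  intro h
  have := congrArg re h
  simp only [add_re, conj_re, zero_re] at this
  linarith

lemma sq_norm_cayley (v w : ℂ) :
    ‖cayley v w‖ ^ 2 = ‖w - v‖ ^ 2 / (‖w - v‖ ^ 2 + 4 * w.re * v.re) := by
  rw [cayley, norm_div, div_pow, sq_norm_add_conj]

lemma norm_cayley_lt_one {v w : ℂ} (hv : 0 < v.re) (hw : 0 < w.re) : ‖cayley v w‖ < 1 := by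
  have h := sq_norm_cayley v w
  have : ‖cayley v w‖ ^ 2 < 1 := by
    rw [h, div_lt_one (by positivity)]
    nlinarith [mul_pos hw hv]
  nlinarith [norm_nonneg (cayley v w)]

lemma cayley_self (v : ℂ) : cayley v v = 0 := by simp [cayley]

lemma cayleyInv_zero (v : ℂ) : cayleyInv v 0 = v := by simp [cayleyInv]

lemma cayleyInv_cayley {v w : ℂ} (hv : 0 < v.re) (hw : 0 < w.re) :
    cayleyInv v (cayley v w) = w := by
  have hwv := add_conj_ne_zero hw hv
  have hvv := add_conj_ne_zero hv hv
  have h1 : 1 - cayley v w = (v + conj v) / (w + conj v) := by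
    rw [cayley]; field_simp; ring
  rw [cayleyInv, h1, cayley]
  field_simp
  ring

lemma one_sub_ne_zero_of_norm_lt_one {z : ℂ} (hz : ‖z‖ < 1) : 1 - z ≠ 0 := by
  rintro h
  rw [← sub_eq_zero.mp h, norm_one] at hz
  exact lt_irrefl _ hz

lemma re_cayleyInv_pos {v z : ℂ} (hv : 0 < v.re) (hz : ‖z‖ < 1) : 0 < (cayleyInv v z).re := by
  have hre : (cayleyInv v z).re = v.re * (1 - normSq z) / normSq (1 - z) := by
    rw [cayleyInv, div_re]
    simp only [normSq_apply, add_re, add_im, sub_re, sub_im, mul_re, mul_im, conj_re, conj_im,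
      one_re, one_im]
    ring
  have hz2 : normSq z < 1 := by rw [← Complex.sq_norm]; nlinarith [norm_nonneg z]
  rw [hre]
  exact div_pos (mul_pos hv (by linarith)) (normSq_pos.mpr (one_sub_ne_zero_of_norm_lt_one hz))

variable {f : ℂ → ℂ}

theorem norm_cayley_le_of_mapsTo (hf : DifferentiableOn ℂ f {z | 0 < z.re})
    (hmaps : MapsTo f {z | 0 < z.re} {z | 0 < z.re}) {ζ ξ : ℂ} (hζ : 0 < ζ.re) (hξ : 0 < ξ.re) :
    ‖cayley (f ξ) (f ζ)‖ ≤ ‖cayley ξ ζ‖ := by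
  set F := cayley (f ξ) ∘ f ∘ cayleyInv ξ
  have hball : MapsTo (cayleyInv ξ) (ball 0 1) {z | 0 < z.re} := fun z hz =>
    re_cayleyInv_pos hξ (mem_ball_zero_iff.mp hz)
  have hF : DifferentiableOn ℂ F (ball 0 1) := by
    have hinv : DifferentiableOn ℂ (cayleyInv ξ) (ball 0 1) := by
      refine ((differentiableOn_const _).add (differentiableOn_id.mul_const _)).div
        ((differentiableOn_const _).sub differentiableOn_id) fun z hz =>
          one_sub_ne_zero_of_norm_lt_one (mem_ball_zero_iff.mp hz)
    have hcay : DifferentiableOn ℂ (cayley (f ξ)) {z | 0 < z.re} :=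
      (differentiableOn_id.sub_const _).div (differentiableOn_id.add_const _)
        fun w hw => add_conj_ne_zero hw (hmaps hξ)
    exact hcay.comp (hf.comp hinv hball) (hmaps.comp hball)
  have hF_maps : MapsTo F (ball 0 1) (closedBall 0 1) := fun z hz =>
    mem_closedBall_zero_iff.mpr (norm_cayley_lt_one (hmaps hξ) (hmaps (hball hz))).le
  have hF0 : F 0 = 0 := by simp [F, cayleyInv_zero, cayley_self]
  simpa [F, cayleyInv_cayley hξ hζ] using
    norm_le_norm_of_mapsTo_ball hF hF_maps hF0 (norm_cayley_lt_one hξ hζ)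

theorem sq_norm_sub_mul_re_le_of_mapsTo (hf : DifferentiableOn ℂ f {z | 0 < z.re})
    (hmaps : MapsTo f {z | 0 < z.re} {z | 0 < z.re}) {ζ ξ : ℂ} (hζ : 0 < ζ.re) (hξ : 0 < ξ.re) :
    ‖f ζ - f ξ‖ ^ 2 * (ζ.re * ξ.re) ≤ ‖ζ - ξ‖ ^ 2 * ((f ζ).re * (f ξ).re) := by
  have hfζ : 0 < (f ζ).re := hmaps hζ
  have hfξ : 0 < (f ξ).re := hmaps hξ
  have h := pow_le_pow_left₀ (norm_nonneg _) (norm_cayley_le_of_mapsTo hf hmaps hζ hξ) 2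
  rw [sq_norm_cayley, sq_norm_cayley, div_le_div_iff₀ (by positivity) (by positivity)] at h
  nlinarith

theorem sq_norm_sub_mul_re_le (hf : DifferentiableOn ℂ f {z | 0 < z.re})
    (hmaps : MapsTo f {z | 0 < z.re} {z | 0 ≤ z.re}) {ζ ξ : ℂ} (hζ : 0 < ζ.re) (hξ : 0 < ξ.re) :
    ‖f ζ - f ξ‖ ^ 2 * (ζ.re * ξ.re) ≤ ‖ζ - ξ‖ ^ 2 * ((f ζ).re * (f ξ).re) := by
  have hδ : ∀ δ : ℝ, 0 < δ →
      ‖f ζ - f ξ‖ ^ 2 * (ζ.re * ξ.re) ≤ ‖ζ - ξ‖ ^ 2 * (((f ζ).re + δ) * ((f ξ).re + δ)) := by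
    intro δ hδ
    have hmaps' : MapsTo (fun z => f z + δ) {z | 0 < z.re} {z | 0 < z.re} := fun z hz => by
      simpa using add_pos_of_nonneg_of_pos (hmaps hz) hδ
    simpa using sq_norm_sub_mul_re_le_of_mapsTo (hf.add_const _) hmaps' hζ hξ
  refine ge_of_tendsto (x := 𝓝[>] (0 : ℝ)) ?_ (eventually_nhdsWithin_of_forall hδ)
  exact Continuous.tendsto' (by fun_prop) _ _ (by simp) |>.mono_left nhdsWithin_le_nhds

theorem norm_deriv_mul_re_le (hf : DifferentiableOn ℂ f {z | 0 < z.re})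
    (hmaps : MapsTo f {z | 0 < z.re} {z | 0 ≤ z.re}) {ξ : ℂ} (hξ : 0 < ξ.re) :
    ‖deriv f ξ‖ * ξ.re ≤ (f ξ).re := by
  have hH : {z : ℂ | 0 < z.re} ∈ 𝓝 ξ := (isOpen_re_gt 0).mem_nhds hξ
  have hd : DifferentiableAt ℂ f ξ := (hf ξ hξ).differentiableAt hH
  have hslope : Tendsto (slope f ξ) (𝓝[≠] ξ) (𝓝 (deriv f ξ)) :=
    hasDerivAt_iff_tendsto_slope.mp hd.hasDerivAt
  have hfre : Tendsto (fun ζ => (f ζ).re) (𝓝[≠] ξ) (𝓝 (f ξ).re) :=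
    (continuous_re.continuousAt.comp hd.continuousAt).tendsto.mono_left nhdsWithin_le_nhds
  have hre : Tendsto re (𝓝[≠] ξ) (𝓝 ξ.re) :=
    continuous_re.tendsto ξ |>.mono_left nhdsWithin_le_nhds
  have hsq : (‖deriv f ξ‖ * ξ.re) ^ 2 ≤ (f ξ).re ^ 2 := by
    have key : ∀ᶠ ζ in 𝓝[≠] ξ, ‖slope f ξ ζ‖ ^ 2 * (ζ.re * ξ.re) ≤ (f ζ).re * (f ξ).re := by
      filter_upwards [nhdsWithin_le_nhds hH, self_mem_nhdsWithin] with ζ hζ hne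
      have hpos : 0 < ‖ζ - ξ‖ ^ 2 := pow_pos (norm_pos_iff.mpr (sub_ne_zero.mpr hne)) 2
      rw [slope_def_field, norm_div, div_pow, div_mul_eq_mul_div, div_le_iff₀ hpos,
        mul_comm _ (‖ζ - ξ‖ ^ 2)]
      exact sq_norm_sub_mul_re_le hf hmaps hζ hξ
    have := le_of_tendsto_of_tendsto ((hslope.norm.pow 2).mul (hre.mul_const ξ.re))
      (hfre.mul_const (f ξ).re) key
    nlinarith
  exact (pow_le_pow_iff_left₀ (by positivity) (hmaps hξ) two_ne_zero).mp hsq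

lemma sq_re_le_sq_norm (z : ℂ) : z.re ^ 2 ≤ ‖z‖ ^ 2 := by
  simpa using pow_le_pow_left₀ (abs_nonneg _) (abs_re_le_norm z) 2

theorem antitoneOn_re_div (hf : DifferentiableOn ℂ f {z | 0 < z.re})
    (hmaps : MapsTo f {z | 0 < z.re} {z | 0 ≤ z.re}) :
    AntitoneOn (fun x : ℝ => (f x).re / x) (Ioi 0) := by
  intro x (hx : 0 < x) y (hy : 0 < y) hxy
  have hsp := sq_norm_sub_mul_re_le hf hmaps (ζ := y) (ξ := x) (by simpa) (by simpa)
  rw [← ofReal_sub, norm_real, Real.norm_eq_abs, sq_abs, ofReal_re, ofReal_re] at hsp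
  have hre := sub_re (f y) (f x) ▸ sq_re_le_sq_norm (f y - f x)
  have ha : 0 ≤ (f y).re := hmaps (show 0 < (y : ℂ).re by simpa)
  have hb : 0 ≤ (f x).re := hmaps (show 0 < (x : ℂ).re by simpa)
  show (f y).re / y ≤ (f x).re / x
  rw [div_le_div_iff₀ hy hx]
  -- with `a = Re f(y)`, `b = Re f(x)` this says `(a x - b y) (a y - b x) ≤ 0`,
  -- while `a y - b x ≥ a x - b y`
  by_contra! h
  nlinarith [mul_le_mul_of_nonneg_left hre (mul_pos hx hy).le, mul_le_mul_of_nonneg_left hxy ha,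
    mul_le_mul_of_nonneg_left hxy hb]

theorem exists_tendsto_re_div_atTop (hf : DifferentiableOn ℂ f {z | 0 < z.re})
    (hmaps : MapsTo f {z | 0 < z.re} {z | 0 ≤ z.re}) :
    ∃ c, 0 ≤ c ∧ Tendsto (fun x : ℝ => (f x).re / x) atTop (𝓝 c) := by
  set q := fun x : ℝ => (f x).re / x
  have hq : ∀ x, 0 < x → 0 ≤ q x := fun x hx =>
    div_nonneg (hmaps (show 0 < (x : ℂ).re by simpa)) hx.le
  have hmax : ∀ t : ℝ, max t 1 ∈ Ioi (0 : ℝ) := fun t => mem_Ioi.mpr (lt_max_of_lt_right one_pos)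
  have hanti : Antitone (fun t => q (max t 1)) := fun s t hst =>
    antitoneOn_re_div hf hmaps (hmax s) (hmax t) (max_le_max_right 1 hst)
  refine ⟨⨅ t, q (max t 1), le_ciInf fun t => hq _ (hmax t), ?_⟩
  refine (tendsto_atTop_ciInf hanti ⟨0, ?_⟩).congr' ?_
  · rintro _ ⟨t, rfl⟩
    exact hq _ (hmax t)
  · filter_upwards [eventually_ge_atTop 1] with t ht
    rw [max_eq_left ht]

theorem mul_re_le_re_of_tendsto (hf : DifferentiableOn ℂ f {z | 0 < z.re})
    (hmaps : MapsTo f {z | 0 < z.re} {z | 0 ≤ z.re}) {c : ℝ}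
    (hc : Tendsto (fun x : ℝ => (f x).re / x) atTop (𝓝 c)) {ζ : ℂ} (hζ : 0 < ζ.re) :
    c * ζ.re ≤ (f ζ).re := by
  have hfζ : 0 ≤ (f ζ).re := hmaps hζ
  rcases le_or_gt c 0 with hc0 | hc0
  · nlinarith
  -- divide Schwarz–Pick at `(ζ, x)` by `x³` and let `x → ∞`: `c² Re ζ ≤ c Re f(ζ)`
  have hinv : Tendsto (fun x : ℝ => ‖ζ‖ / x) atTop (𝓝 0) :=
    tendsto_const_nhds.div_atTop tendsto_id
  have hinv' : Tendsto (fun x : ℝ => (f ζ).re / x) atTop (𝓝 0) :=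
    tendsto_const_nhds.div_atTop tendsto_id
  have hlhs : Tendsto (fun x : ℝ => ((f x).re / x - (f ζ).re / x) ^ 2 * ζ.re) atTop
      (𝓝 (c ^ 2 * ζ.re)) := by
    simpa using ((hc.sub hinv').pow 2).mul_const ζ.re
  have hrhs : Tendsto (fun x : ℝ => (‖ζ‖ / x + 1) ^ 2 * (f ζ).re * ((f x).re / x)) atTop
      (𝓝 ((f ζ).re * c)) := by
    simpa using (((hinv.add_const 1).pow 2).mul_const (f ζ).re).mul hc
  have key : ∀ᶠ x : ℝ in atTop, ((f x).re / x - (f ζ).re / x) ^ 2 * ζ.re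
      ≤ (‖ζ‖ / x + 1) ^ 2 * (f ζ).re * ((f x).re / x) := by
    filter_upwards [eventually_gt_atTop 0] with x hx
    have hsp := sq_norm_sub_mul_re_le hf hmaps hζ (ξ := x) (by simpa)
    rw [ofReal_re] at hsp
    have hre := sq_re_le_sq_norm (f ζ - f x)
    have hnorm : ‖ζ - x‖ ≤ ‖ζ‖ + x := by
      simpa [abs_of_pos hx] using norm_sub_le ζ (x : ℂ)
    have hfx : 0 ≤ (f x).re := hmaps (show 0 < (x : ℂ).re by simpa)
    have e1 : ((f x).re / x - (f ζ).re / x) ^ 2 * ζ.re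
        = (f ζ - f x).re ^ 2 * (ζ.re * x) / x ^ 3 := by
      rw [sub_re]; field_simp; ring
    have e2 : (‖ζ‖ / x + 1) ^ 2 * (f ζ).re * ((f x).re / x)
        = (‖ζ‖ + x) ^ 2 * ((f ζ).re * (f x).re) / x ^ 3 := by
      field_simp
    rw [e1, e2]
    refine div_le_div_of_nonneg_right ?_ (by positivity)
    calc (f ζ - f x).re ^ 2 * (ζ.re * x) ≤ ‖f ζ - f x‖ ^ 2 * (ζ.re * x) := by gcongr
      _ ≤ ‖ζ - x‖ ^ 2 * ((f ζ).re * (f x).re) := hsp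
      _ ≤ (‖ζ‖ + x) ^ 2 * ((f ζ).re * (f x).re) := by gcongr
  have := le_of_tendsto_of_tendsto hlhs hrhs key
  nlinarith

theorem mul_norm_sub_le_re_of_mul_norm_le_re
    (hf : DifferentiableOn ℂ f {z | 0 < z.re}) (hmaps : MapsTo f {z | 0 < z.re} {z | 0 ≤ z.re})
    {k : ℝ} {ζ : ℂ} (hζ : 0 < ζ.re) (hk : k * ‖ζ‖ ≤ ζ.re) :
    k * ‖f ζ - f ‖ζ‖‖ ≤ 4 * (f ‖ζ‖).re := by
  set x := ‖ζ‖
  have hx : 0 < x := hζ.trans_le (re_le_norm ζ)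
  have hk1 : k ≤ 1 :=
    le_of_mul_le_mul_right (hk.trans ((re_le_norm ζ).trans_eq (one_mul x).symm)) hx
  have hsp := sq_norm_sub_mul_re_le hf hmaps hζ (ξ := x) (by simpa)
  rw [ofReal_re] at hsp
  set D := ‖f ζ - f x‖
  set R := (f x).re
  have hR : 0 ≤ R := hmaps (show 0 < (x : ℂ).re by simpa)
  have hD : 0 ≤ D := norm_nonneg _
  have hfζ : (f ζ).re ≤ R + D := by
    have := re_le_norm (f ζ - f x)
    rw [sub_re] at this
    linarith
  have hdist : ‖ζ - x‖ ^ 2 ≤ 2 * x ^ 2 := by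
    have h1 : ‖ζ‖ ^ 2 = ζ.re ^ 2 + ζ.im ^ 2 := by rw [Complex.sq_norm, normSq_apply]; ring
    rw [Complex.sq_norm, normSq_apply]
    simp only [sub_re, sub_im, ofReal_re, ofReal_im, sub_zero]
    nlinarith
  have hquad : k * D ^ 2 ≤ 2 * R * (R + D) := by
    have h1 : k * D ^ 2 * x ^ 2 ≤ 2 * R * (R + D) * x ^ 2 := by
      calc k * D ^ 2 * x ^ 2 = D ^ 2 * ((k * x) * x) := by ring
        _ ≤ D ^ 2 * (ζ.re * x) := by gcongr
        _ ≤ ‖ζ - x‖ ^ 2 * ((f ζ).re * R) := hsp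
        _ ≤ 2 * x ^ 2 * ((R + D) * R) := by
          gcongr
          · exact mul_nonneg (hmaps hζ) hR
        _ = 2 * R * (R + D) * x ^ 2 := by ring
    exact le_of_mul_le_mul_right h1 (by positivity)
  by_contra! h
  nlinarith [mul_le_mul_of_nonneg_left hk1 (sq_nonneg D),
    mul_lt_mul_of_pos_right h (show 0 < D by nlinarith)]

theorem norm_deriv_le_of_mul_norm_le_re
    (hf : DifferentiableOn ℂ f {z | 0 < z.re}) (hmaps : MapsTo f {z | 0 < z.re} {z | 0 ≤ z.re})
    {k : ℝ} (hk0 : 0 < k) {ζ : ℂ} (hζ : 0 < ζ.re) (hk : k * ‖ζ‖ ≤ ζ.re) :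
    ‖deriv f ζ‖ ≤ (k + 4) / k ^ 2 * ((f ‖ζ‖).re / ‖ζ‖) := by
  have hx : 0 < ‖ζ‖ := hζ.trans_le (re_le_norm ζ)
  have hharnack := mul_norm_sub_le_re_of_mul_norm_le_re hf hmaps hζ hk
  have hfζ : (f ζ).re ≤ (f ‖ζ‖).re + ‖f ζ - f ‖ζ‖‖ := by
    have := re_le_norm (f ζ - f ‖ζ‖)
    rw [sub_re] at this
    linarith
  have h : ‖deriv f ζ‖ * (k * ‖ζ‖) ≤ (k + 4) / k * (f ‖ζ‖).re := by
    calc ‖deriv f ζ‖ * (k * ‖ζ‖) ≤ ‖deriv f ζ‖ * ζ.re := by gcongr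
      _ ≤ (f ζ).re := norm_deriv_mul_re_le hf hmaps hζ
      _ ≤ (k + 4) / k * (f ‖ζ‖).re := by
        rw [div_mul_eq_mul_div, le_div_iff₀ hk0]
        nlinarith
  rw [← le_div_iff₀ (by positivity)] at h
  exact h.trans_eq (by field_simp)

theorem norm_le_of_mul_norm_le_re
    (hf : DifferentiableOn ℂ f {z | 0 < z.re}) (hmaps : MapsTo f {z | 0 < z.re} {z | 0 ≤ z.re})
    {k : ℝ} (hk0 : 0 < k) {ζ : ℂ} (hζ : 0 < ζ.re) (hk : k * ‖ζ‖ ≤ ζ.re) :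
    ‖f ζ‖ ≤ ‖f ‖ζ‖‖ + 4 / k * (f ‖ζ‖).re := by
  have hharnack := mul_norm_sub_le_re_of_mul_norm_le_re hf hmaps hζ hk
  calc ‖f ζ‖ ≤ ‖f ‖ζ‖‖ + ‖f ζ - f ‖ζ‖‖ := norm_le_insert' _ _
    _ ≤ ‖f ‖ζ‖‖ + 4 / k * (f ‖ζ‖).re := by
      gcongr
      rw [div_mul_eq_mul_div, le_div_iff₀' hk0]
      exact hharnack

theorem tendsto_norm_div_atTop_of_tendsto_re_div
    (hf : DifferentiableOn ℂ f {z | 0 < z.re}) (hmaps : MapsTo f {z | 0 < z.re} {z | 0 ≤ z.re})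
    (h0 : Tendsto (fun x : ℝ => (f x).re / x) atTop (𝓝 0)) :
    Tendsto (fun x : ℝ => ‖f x‖ / x) atTop (𝓝 0) := by
  have hderiv : ∀ᶠ x : ℝ in atTop, HasDerivAt (fun t : ℝ => f t) (deriv f x) x := by
    filter_upwards [eventually_gt_atTop 0] with x hx
    have hx' : (x : ℂ) ∈ {z : ℂ | 0 < z.re} := by simpa
    exact ((hf x hx').differentiableAt ((isOpen_re_gt 0).mem_nhds hx')).hasDerivAt.comp_ofReal
  have hderiv0 : Tendsto (fun x : ℝ => deriv f x) atTop (𝓝 0) := by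
    refine squeeze_zero_norm' ?_ h0
    filter_upwards [eventually_gt_atTop 0] with x hx
    rw [le_div_iff₀ hx]
    simpa using norm_deriv_mul_re_le hf hmaps (ξ := x) (by simpa)
  exact (isLittleO_id_of_tendsto_deriv hderiv hderiv0).norm_left.tendsto_div_nhds_zero

noncomputable def sectorCobounded (k : ℝ) : Filter ℂ :=
  comap (fun z : ℂ => ‖z‖) atTop ⊓ 𝓟 {ζ | k * ‖ζ‖ ≤ ζ.re}

lemma tendsto_norm_sectorCobounded (k : ℝ) :
    Tendsto (fun z : ℂ => ‖z‖) (sectorCobounded k) atTop :=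
  tendsto_comap.mono_left inf_le_left

lemma eventually_sectorCobounded {k : ℝ} (hk : 0 < k) :
    ∀ᶠ ζ in sectorCobounded k, 0 < ζ.re ∧ k * ‖ζ‖ ≤ ζ.re := by
  filter_upwards [mem_inf_of_right (mem_principal_self _),
    (tendsto_norm_sectorCobounded k).eventually_gt_atTop 0] with ζ (hζ : k * ‖ζ‖ ≤ ζ.re) hpos
  exact ⟨(mul_pos hk hpos).trans_le hζ, hζ⟩

theorem tendsto_deriv_sectorCobounded_zero
    (hf : DifferentiableOn ℂ f {z | 0 < z.re}) (hmaps : MapsTo f {z | 0 < z.re} {z | 0 ≤ z.re})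
    (h0 : Tendsto (fun x : ℝ => (f x).re / x) atTop (𝓝 0)) {k : ℝ} (hk : 0 < k) :
    Tendsto (deriv f) (sectorCobounded k) (𝓝 0) := by
  have hbound : Tendsto (fun ζ : ℂ => (k + 4) / k ^ 2 * ((f ‖ζ‖).re / ‖ζ‖))
      (sectorCobounded k) (𝓝 0) := by
    simpa using (h0.comp (tendsto_norm_sectorCobounded k)).const_mul ((k + 4) / k ^ 2)
  refine squeeze_zero_norm' ?_ hbound
  filter_upwards [eventually_sectorCobounded hk] with ζ ⟨hζ, hkζ⟩
  exact norm_deriv_le_of_mul_norm_le_re hf hmaps hk hζ hkζ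

theorem tendsto_div_sectorCobounded_zero
    (hf : DifferentiableOn ℂ f {z | 0 < z.re}) (hmaps : MapsTo f {z | 0 < z.re} {z | 0 ≤ z.re})
    (h0 : Tendsto (fun x : ℝ => (f x).re / x) atTop (𝓝 0)) {k : ℝ} (hk : 0 < k) :
    Tendsto (fun ζ => f ζ / ζ) (sectorCobounded k) (𝓝 0) := by
  have hnorm := tendsto_norm_sectorCobounded k
  have hbound : Tendsto (fun ζ : ℂ => ‖f ‖ζ‖‖ / ‖ζ‖ + 4 / k * ((f ‖ζ‖).re / ‖ζ‖))
      (sectorCobounded k) (𝓝 0) := by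
    simpa using ((tendsto_norm_div_atTop_of_tendsto_re_div hf hmaps h0).comp hnorm).add
      ((h0.comp hnorm).const_mul (4 / k))
  refine squeeze_zero_norm' ?_ hbound
  filter_upwards [eventually_sectorCobounded hk] with ζ ⟨hζ, hkζ⟩
  have hx : 0 < ‖ζ‖ := hζ.trans_le (re_le_norm ζ)
  rw [norm_div, ← mul_div_assoc, ← add_div]
  exact div_le_div_of_nonneg_right (norm_le_of_mul_norm_le_re hf hmaps hk hζ hkζ) hx.le

theorem tendsto_deriv_and_div_sectorCobounded
    (hf : DifferentiableOn ℂ f {z | 0 < z.re}) (hmaps : MapsTo f {z | 0 < z.re} {z | 0 ≤ z.re})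
    {c : ℝ} (hc : Tendsto (fun x : ℝ => (f x).re / x) atTop (𝓝 c)) {k : ℝ} (hk : 0 < k) :
    Tendsto (deriv f) (sectorCobounded k) (𝓝 c) ∧
      Tendsto (fun ζ => f ζ / ζ) (sectorCobounded k) (𝓝 c) := by
  set g := fun z => f z - c * z
  have hg : DifferentiableOn ℂ g {z | 0 < z.re} := hf.sub (differentiableOn_id.const_mul _)
  have hg_maps : MapsTo g {z | 0 < z.re} {z | 0 ≤ z.re} := fun z (hz : 0 < z.re) => by
    simpa [g] using mul_re_le_re_of_tendsto hf hmaps hc hz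
  have hg0 : Tendsto (fun x : ℝ => (g x).re / x) atTop (𝓝 0) := by
    refine (sub_self c ▸ hc.sub_const c).congr' ?_
    filter_upwards [eventually_gt_atTop 0] with x hx
    simp only [g, sub_re, re_ofReal_mul, ofReal_re]
    field_simp
  constructor
  · refine (zero_add (c : ℂ) ▸
      (tendsto_deriv_sectorCobounded_zero hg hg_maps hg0 hk).add_const (c : ℂ)).congr' ?_
    filter_upwards [eventually_sectorCobounded hk] with ζ ⟨hζ, _⟩
    have hd := ((hf ζ hζ).differentiableAt ((isOpen_re_gt 0).mem_nhds hζ)).hasDerivAt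
    have hgd : HasDerivAt g (deriv f ζ - c * 1) ζ :=
      hd.sub ((hasDerivAt_id' ζ).const_mul (c : ℂ))
    rw [hgd.deriv]
    ring
  · refine (zero_add (c : ℂ) ▸
      (tendsto_div_sectorCobounded_zero hg hg_maps hg0 hk).add_const (c : ℂ)).congr' ?_
    filter_upwards [eventually_sectorCobounded hk] with ζ ⟨hζ, _⟩
    have hζ0 : ζ ≠ 0 := fun h => by simp [h] at hζ
    simp only [g]
    field_simp
    ring

lemma cos_mul_norm_le_re {β : ℝ} (hβ : β ≤ Real.pi) {ζ : ℂ} (h : |arg ζ| ≤ β) :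
    Real.cos β * ‖ζ‖ ≤ ζ.re :=
  calc Real.cos β * ‖ζ‖ ≤ Real.cos |arg ζ| * ‖ζ‖ := by
        gcongr
        exact Real.cos_le_cos_of_nonneg_of_le_pi (abs_nonneg _) hβ h
    _ = ζ.re := by rw [Real.cos_abs, mul_comm, norm_mul_cos_arg]

end Complex

theorem stmt13_general (ψ : ℂ → ℂ) (H : Set ℂ) (hH : H = {z : ℂ | 0 < z.re})
    (hψ : DifferentiableOn ℂ ψ H) (hmap : Set.MapsTo ψ H H) :
    ∀ β : ℝ, 0 < β → β < Real.pi / 2 →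
      ∃ c : ℝ, 0 ≤ c ∧
        Tendsto (deriv ψ)
          (comap (fun z : ℂ => ‖z‖) atTop ⊓ 𝓟 {ζ : ℂ | |Complex.arg ζ| ≤ β}) (nhds (c : ℂ)) ∧
        Tendsto (fun ζ => ψ ζ / ζ)
          (comap (fun z : ℂ => ‖z‖) atTop ⊓ 𝓟 {ζ : ℂ | |Complex.arg ζ| ≤ β}) (nhds (c : ℂ)) := by
  subst hH
  intro β hβ0 hβ
  have hmaps : MapsTo ψ {z | 0 < z.re} {z | 0 ≤ z.re} :=
    hmap.mono_right fun z (hz : 0 < z.re) => hz.le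
  obtain ⟨c, hc0, hc⟩ := exists_tendsto_re_div_atTop hψ hmaps
  have hcos : 0 < Real.cos β := Real.cos_pos_of_mem_Ioo ⟨by linarith, hβ⟩
  have hsector : comap (fun z : ℂ => ‖z‖) atTop ⊓ 𝓟 {ζ : ℂ | |arg ζ| ≤ β}
      ≤ sectorCobounded (Real.cos β) :=
    inf_le_inf_left _ <| principal_mono.mpr fun ζ hζ =>
      cos_mul_norm_le_re (by linarith [Real.pi_pos]) hζ
  obtain ⟨hderiv, hdiv⟩ := tendsto_deriv_and_div_sectorCobounded hψ hmaps hc hcos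
  exact ⟨c, hc0, hderiv.mono_left hsector, hdiv.mono_left hsector⟩

/-- Angular derivative at infinity: a conformal map of the right half plane into itself
fixing `∞` has `ψ'(ζ) → c ≥ 0` and `ψ(ζ)/ζ → c` as `ζ → ∞` in sectors `|arg ζ| ≤ β < π/2`. -/
theorem stmt13 (ψ : ℂ → ℂ) (H : Set ℂ) (hH : H = {z : ℂ | 0 < z.re})
    (hψ : DifferentiableOn ℂ ψ H) (hinj : Set.InjOn ψ H) (hmap : Set.MapsTo ψ H H)
    (hinf : Tendsto ψ (comap (fun z : ℂ => ‖z‖) atTop ⊓ 𝓟 H) (comap (fun z : ℂ => ‖z‖) atTop)) :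
    ∀ β : ℝ, 0 < β → β < Real.pi / 2 →
      ∃ c : ℝ, 0 ≤ c ∧
        Tendsto (deriv ψ)
          (comap (fun z : ℂ => ‖z‖) atTop ⊓ 𝓟 {ζ : ℂ | |Complex.arg ζ| ≤ β}) (nhds (c : ℂ)) ∧
        Tendsto (fun ζ => ψ ζ / ζ)
          (comap (fun z : ℂ => ‖z‖) atTop ⊓ 𝓟 {ζ : ℂ | |Complex.arg ζ| ≤ β}) (nhds (c : ℂ)) :=
  stmt13_general ψ H hH hψ hmap
end
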